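/- arXiv:1508.07287 — 7 statements merged into one kernel-verified Lean document; each statement's English description precedes it below -/
import Mathlib

section
/- Let R be a discrete valuation ring whose maximal ideal is generated by a uniformizer π and whose residue field R/πR is finite. Fix n ∈ R and let Λ = R[x]/(x(x−n)R[x]), a free R-module with basis {1, x}. Then every R-submodule I of Λ whose quotient Λ/I is finite is equal to the R-span of the two elements π^{r₁} + a·x and π^{r₂}·x for some natural numbers r₁, r₂ and some a ∈ R. -/
/-!
`Λ` is spanned over `R` by `1` and `x`. For a submodule `I`, the ideals `{b | b • x ∈ I}` and
`{c | c • 1 ∈ I + R x}` are nonzero, since `Λ ⧸ I` is finite while a discrete valuation ring is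
infinite; hence they are `(π ^ r₂)` and `(π ^ r₁)`. Choosing `a` with `π ^ r₁ + a x ∈ I`, any
element of `I` is reduced to zero first by a multiple of `π ^ r₁ + a x`, then by one of `π ^ r₂ x`.
-/

open Polynomial

lemma PowerBasis.span_one_gen_eq_top {R S : Type*} [CommRing R] [Ring S] [Algebra R S]
    (pb : PowerBasis R S) (hdim : pb.dim = 2) :
    Submodule.span R {1, pb.gen} = ⊤ := by
  obtain ⟨gen, dim, basis, basis_eq_pow⟩ := pb
  subst hdim
  rw [← basis.span_eq, funext basis_eq_pow]
  congr 1
  ext y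
  simp [Fin.exists_fin_two, eq_comm]

namespace Submodule

variable {R M : Type*} [Ring R] [AddCommGroup M] [Module R M]

lemma mem_sup_span_singleton_iff {I : Submodule R M} {x y : M} :
    y ∈ I ⊔ span R {x} ↔ ∃ b : R, y + b • x ∈ I := by
  rw [mem_sup]
  constructor
  · rintro ⟨z, hz, _, hw, rfl⟩
    obtain ⟨b, rfl⟩ := mem_span_singleton.mp hw
    exact ⟨-b, by simpa [add_assoc] using hz⟩
  · rintro ⟨b, hb⟩
    exact ⟨_, hb, -b • x, smul_mem _ _ (mem_span_singleton_self x), by simp [add_assoc]⟩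

lemma comap_ne_bot_of_finite_quotient {N : Type*} [AddCommGroup N] [Module R N] [Infinite N]
    (I : Submodule R M) [Finite (M ⧸ I)] (f : N →ₗ[R] M) : I.comap f ≠ ⊥ := by
  intro h
  have hinj : Function.Injective (I.mkQ ∘ₗ f) := by
    rw [← LinearMap.ker_eq_bot, LinearMap.ker_comp, ker_mkQ, h]
  have := Finite.of_injective _ hinj
  exact _root_.not_finite N

open LinearMap in
lemma exists_eq_span_pair_of_comap_eq_span {I : Submodule R M} {e x : M}
    (hspan : span R {e, x} = ⊤) {g₁ g₂ : R}
    (h₁ : (I ⊔ span R {x}).comap (toSpanSingleton R M e) = Ideal.span {g₁})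
    (h₂ : I.comap (toSpanSingleton R M x) = Ideal.span {g₂}) :
    ∃ a : R, I = span R {g₁ • e + a • x, g₂ • x} := by
  have mem₁ (c : R) : c ∈ Ideal.span {g₁} ↔ ∃ b : R, c • e + b • x ∈ I := by
    rw [← h₁, mem_comap, toSpanSingleton_apply, mem_sup_span_singleton_iff]
  have mem₂ (b : R) : b ∈ Ideal.span {g₂} ↔ b • x ∈ I := by
    rw [← h₂, mem_comap, toSpanSingleton_apply]
  obtain ⟨a, ha⟩ := (mem₁ g₁).mp (Ideal.mem_span_singleton_self g₁)
  have hg₂ : g₂ • x ∈ I := (mem₂ g₂).mp (Ideal.mem_span_singleton_self g₂)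
  refine ⟨a, le_antisymm (fun z hz => ?_) (span_le.mpr ?_)⟩
  · obtain ⟨c, b, rfl⟩ := mem_span_pair.mp (hspan ▸ mem_top : z ∈ span R {e, x})
    obtain ⟨u, rfl⟩ := Ideal.mem_span_singleton'.mp ((mem₁ c).mpr ⟨b, hz⟩)
    have hrest : (b - u * a) • x ∈ I := by
      convert I.sub_mem hz (I.smul_mem u ha) using 1
      simp only [sub_smul, mul_smul, smul_add]
      abel
    obtain ⟨v, hv⟩ := Ideal.mem_span_singleton'.mp ((mem₂ _).mpr hrest)
    refine mem_span_pair.mpr ⟨u, v, ?_⟩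
    rw [smul_add, smul_smul, smul_smul, smul_smul, add_assoc, ← add_smul, hv, add_sub_cancel]
  · rintro _ (rfl | rfl)
    exacts [ha, hg₂]

end Submodule

namespace IsDiscreteValuationRing

variable {R : Type*} [CommRing R] [IsDomain R] [IsDiscreteValuationRing R]

instance infinite : Infinite R :=
  not_finite_iff_infinite.mp fun _ =>
    not_a_field R (IsLocalRing.isField_iff_maximalIdeal_eq.mp (Finite.isField_of_domain R))

open Submodule LinearMap in
theorem exists_eq_span_pow_smul_pair {M : Type*} [AddCommGroup M] [Module R M] {π : R}
    (hπ : Irreducible π) {e x : M} (hspan : span R {e, x} = ⊤)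
    (I : Submodule R M) [hI : Finite (M ⧸ I)] :
    ∃ (r₁ r₂ : ℕ) (a : R), I = span R {π ^ r₁ • e + a • x, π ^ r₂ • x} := by
  have hne₂ := I.comap_ne_bot_of_finite_quotient (toSpanSingleton R M x)
  have hne₁ : (I ⊔ span R {x}).comap (toSpanSingleton R M e) ≠ ⊥ :=
    ne_bot_of_le_ne_bot (I.comap_ne_bot_of_finite_quotient _) (comap_mono le_sup_left)
  obtain ⟨r₁, h₁⟩ := ideal_eq_span_pow_irreducible hne₁ hπ
  obtain ⟨r₂, h₂⟩ := ideal_eq_span_pow_irreducible hne₂ hπ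
  exact ⟨r₁, r₂, exists_eq_span_pair_of_comap_eq_span hspan h₁ h₂⟩

end IsDiscreteValuationRing

theorem stmt0_general (R : Type*) [CommRing R] [IsDomain R] [IsDiscreteValuationRing R]
    (π : R) (hπ : IsLocalRing.maximalIdeal R = Ideal.span {π})
    (n : R)
    (I : Submodule R (R[X] ⧸ Ideal.span {X * (X - C n)}))
    (hI : Finite ((R[X] ⧸ Ideal.span {X * (X - C n)}) ⧸ I)) :
    ∃ (r₁ r₂ : ℕ) (a : R),
      I = Submodule.span R
        { Ideal.Quotient.mk (Ideal.span {X * (X - C n)}) (C (π ^ r₁) + C a * X),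
          Ideal.Quotient.mk (Ideal.span {X * (X - C n)}) (C (π ^ r₂) * X) } := by
  have hf : (X * (X - C n)).Monic := monic_X.mul (monic_X_sub_C n)
  have hdeg : (X * (X - C n)).natDegree = 2 := by
    rw [monic_X.natDegree_mul (monic_X_sub_C n), natDegree_X, natDegree_X_sub_C]
  obtain ⟨r₁, r₂, a, h⟩ := IsDiscreteValuationRing.exists_eq_span_pow_smul_pair
    ((IsDiscreteValuationRing.irreducible_iff_uniformizer π).mpr hπ)
    ((AdjoinRoot.powerBasis' hf).span_one_gen_eq_top hdeg) I
    -- instance search misses `hI`: its module structure is not reducibly the synthesized one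
    (hI := hI)
  refine ⟨r₁, r₂, a, h.trans ?_⟩
  congr 1
  rw [AdjoinRoot.powerBasis'_gen, ← AdjoinRoot.mk_X, ← map_one (AdjoinRoot.mk _),
    AdjoinRoot.smul_mk, AdjoinRoot.smul_mk, AdjoinRoot.smul_mk, ← map_add, smul_eq_C_mul,
    smul_eq_C_mul, smul_eq_C_mul, mul_one]
  rfl

/-- Let `R` be a discrete valuation ring with uniformizer `π`
(so the maximal ideal of `R` is `πR`) and finite residue field `R/πR`.
Fix `n ∈ R` and let `Λ = R[x]/(x(x-n)R[x])`.  Then every `R`-submodule `I` of `Λ`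
with finite quotient `Λ/I` is the `R`-span of `π^r₁ + a·x` and `π^r₂·x`
for some naturals `r₁, r₂` and some `a ∈ R`. -/
theorem stmt0 (R : Type*) [CommRing R] [IsDomain R] [IsDiscreteValuationRing R]
    (π : R) (hπ : IsLocalRing.maximalIdeal R = Ideal.span {π})
    (hres : Finite (R ⧸ Ideal.span {π})) (n : R)
    (I : Submodule R (R[X] ⧸ Ideal.span {X * (X - C n)}))
    (hI : Finite ((R[X] ⧸ Ideal.span {X * (X - C n)}) ⧸ I)) :
    ∃ (r₁ r₂ : ℕ) (a : R),
      I = Submodule.span R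
        { Ideal.Quotient.mk (Ideal.span {X * (X - C n)}) (C (π ^ r₁) + C a * X),
          Ideal.Quotient.mk (Ideal.span {X * (X - C n)}) (C (π ^ r₂) * X) } :=
  stmt0_general R π hπ n I hI
end

section
/- Let R be a discrete valuation ring with uniformizer π, let n ∈ R, and let Λ = R[x]/(x(x−n)R[x]). For natural numbers r₁, r₂ and a ∈ R, let I be the R-span in Λ of the two elements π^{r₁} + a·x and π^{r₂}·x. Then I is a (two-sided) ideal of the ring Λ if and only if π^{r₁} + a·n ∈ π^{r₂}R. -/
open Polynomial

/-!
An `R`-submodule of `Λ = R[x]/(x(x - n))` is an ideal as soon as it is stable under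
multiplication by `x`, since `x` generates `Λ` as an `R`-algebra. On the generators,
`x · π^r₂ x = n · π^r₂ x` always lies in `I`, while `x (π^r₁ + a x) = (π^r₁ + a n) x` because
`x² = n x`. As `1, x` are `R`-linearly independent and `π^r₁ ≠ 0`, an expression
`(π^r₁ + a n) x = α (π^r₁ + a x) + β π^r₂ x` forces `α = 0`, i.e. `π^r₁ + a n = β π^r₂`.
-/

section IdealOfSubmodule

variable {R A : Type*} [CommSemiring R] [Semiring A] [Algebra R A]

theorem exists_ideal_restrictScalars_eq_iff (S : Submodule R A) :
    (∃ J : Ideal A, J.restrictScalars R = S) ↔ ∀ a : A, ∀ y ∈ S, a * y ∈ S := by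
  constructor
  · rintro ⟨J, rfl⟩ a y hy
    exact J.mul_mem_left a hy
  · intro h
    exact ⟨{ S with smul_mem' := h }, rfl⟩

theorem forall_mul_mem_iff_of_adjoin_eq_top {x : A} (hx : Algebra.adjoin R {x} = ⊤)
    (S : Submodule R A) :
    (∀ a : A, ∀ y ∈ S, a * y ∈ S) ↔ ∀ y ∈ S, x * y ∈ S := by
  refine ⟨fun h => h x, fun h a => ?_⟩
  have ha : a ∈ Algebra.adjoin R {x} := hx ▸ Algebra.mem_top
  induction ha using Algebra.adjoin_induction with
  | mem b hb => rw [Set.mem_singleton_iff.mp hb]; exact h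
  | algebraMap r => intro y hy; rw [← Algebra.smul_def]; exact S.smul_mem r hy
  | add b c _ _ hb hc => intro y hy; rw [add_mul]; exact S.add_mem (hb y hy) (hc y hy)
  | mul b c _ _ hb hc => intro y hy; rw [mul_assoc]; exact hb _ (hc y hy)

end IdealOfSubmodule

theorem Submodule.forall_mem_span_apply_mem_span_iff {R M : Type*} [Semiring R] [AddCommMonoid M]
    [Module R M] (g : M →ₗ[R] M) (s : Set M) :
    (∀ y ∈ span R s, g y ∈ span R s) ↔ ∀ y ∈ s, g y ∈ span R s :=
  span_le (p := (span R s).comap g)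

theorem smul_mem_span_pair_iff {R M : Type*} [CommRing R] [IsDomain R] [AddCommGroup M]
    [Module R M] {e₀ e₁ : M} (he : LinearIndependent R ![e₀, e₁]) {p a q c : R} (hp : p ≠ 0) :
    c • e₁ ∈ Submodule.span R {p • e₀ + a • e₁, q • e₁} ↔ c ∈ Ideal.span {q} := by
  rw [Submodule.mem_span_pair, Ideal.mem_span_singleton']
  constructor
  · rintro ⟨α, β, h⟩
    have hzero : (α * p) • e₀ + (α * a + β * q - c) • e₁ = 0 := by
      linear_combination (norm := module) h
    obtain ⟨hαp, hc⟩ := LinearIndependent.pair_iff.mp he _ _ hzero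
    obtain rfl : α = 0 := (mul_eq_zero.mp hαp).resolve_right hp
    exact ⟨β, by linear_combination hc⟩
  · rintro ⟨β, rfl⟩
    exact ⟨0, β, by module⟩

namespace AdjoinRoot

variable {R : Type*} [CommRing R]

theorem mk_C_add_C_mul_X (f : R[X]) (s t : R) : mk f (C s + C t * X) = s • 1 + t • root f := by
  simp only [map_add, map_mul, mk_C, mk_X, Algebra.smul_def, mul_one, algebraMap_eq]

theorem linearIndependent_one_root [IsDomain R] {f : R[X]} (hf : 1 < f.degree) :
    LinearIndependent R ![1, root f] := by
  refine LinearIndependent.pair_iff.mpr fun s t hst => ?_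
  rw [← mk_C_add_C_mul_X, mk_eq_zero, add_comm] at hst
  have hlin : C t * X + C s = 0 :=
    eq_zero_of_dvd_of_degree_lt hst (degree_linear_le.trans_lt hf)
  exact ⟨by simpa using congrArg (coeff · 0) hlin, by simpa using congrArg (coeff · 1) hlin⟩

theorem root_mul_self_X_mul_X_sub_C (n : R) :
    root (X * (X - C n)) * root (X * (X - C n)) = n • root (X * (X - C n)) := by
  have h := mk_self (f := X * (X - C n))
  simp only [map_mul, map_sub, mk_X, mk_C, ← algebraMap_eq] at h
  rw [Algebra.smul_def]
  linear_combination h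

end AdjoinRoot

open AdjoinRoot in
/-- Let `R` be a discrete valuation ring with uniformizer `π`,
`n ∈ R`, and `Λ = R[x]/(x(x-n)R[x])`.  For naturals `r₁, r₂` and `a ∈ R`, the
`R`-span `I` of `π^r₁ + a·x` and `π^r₂·x` in `Λ` is an ideal of the ring `Λ`
if and only if `π^r₁ + a·n ∈ π^r₂ R`. -/
theorem stmt1 (R : Type*) [CommRing R] [IsDomain R] [IsDiscreteValuationRing R]
    (π : R) (hπ : IsLocalRing.maximalIdeal R = Ideal.span {π})
    (n : R) (r₁ r₂ : ℕ) (a : R) :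
    (∃ J : Ideal (R[X] ⧸ Ideal.span {X * (X - C n)}),
        Submodule.restrictScalars R J =
          Submodule.span R
            { Ideal.Quotient.mk (Ideal.span {X * (X - C n)}) (C (π ^ r₁) + C a * X),
              Ideal.Quotient.mk (Ideal.span {X * (X - C n)}) (C (π ^ r₂) * X) })
      ↔ π ^ r₁ + a * n ∈ Ideal.span {π ^ r₂} := by
  set f : R[X] := X * (X - C n)
  have hπ0 : π ≠ 0 := by
    rintro rfl
    exact IsDiscreteValuationRing.not_a_field R (by rw [hπ, Ideal.span_singleton_eq_bot.mpr rfl])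
  have hli : LinearIndependent R ![1, root f] := linearIndependent_one_root <| by
    rw [degree_mul, degree_X, degree_X_sub_C]; decide
  have hv : mk f (C (π ^ r₂) * X) = π ^ r₂ • root f := by
    simpa using mk_C_add_C_mul_X f 0 (π ^ r₂)
  have hxu : root f * (π ^ r₁ • 1 + a • root f) = (π ^ r₁ + a * n) • root f := by
    rw [mul_add, mul_smul_comm, mul_smul_comm, mul_one, root_mul_self_X_mul_X_sub_C]; module
  have hxv : root f * (π ^ r₂ • root f) = n • π ^ r₂ • root f := by
    rw [mul_smul_comm, root_mul_self_X_mul_X_sub_C, smul_comm]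
  show (∃ J : Ideal (AdjoinRoot f), J.restrictScalars R =
      Submodule.span R {mk f (C (π ^ r₁) + C a * X), mk f (C (π ^ r₂) * X)}) ↔ _
  rw [mk_C_add_C_mul_X, hv, exists_ideal_restrictScalars_eq_iff,
    forall_mul_mem_iff_of_adjoin_eq_top adjoinRoot_eq_top]
  refine (Submodule.forall_mem_span_apply_mem_span_iff (LinearMap.mulLeft R (root f)) _).trans ?_
  simp only [Set.mem_insert_iff, Set.mem_singleton_iff, forall_eq_or_imp, forall_eq,
    LinearMap.mulLeft_apply, hxu, hxv]
  have hvS : π ^ r₂ • root f ∈ Submodule.span R {π ^ r₁ • 1 + a • root f, π ^ r₂ • root f} :=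
    Submodule.subset_span (Set.mem_insert_of_mem _ rfl)
  rw [and_iff_left (Submodule.smul_mem _ n hvS)]
  exact smul_mem_span_pair_iff hli (pow_ne_zero r₁ hπ0)
end

section
/- Let R be a discrete valuation ring with uniformizer π and finite residue field of cardinality q, let Λ = R[x]/(x²R[x]), and for each natural number m let a_m be the number of ideals of Λ of index q^m. Then in the ring of formal power series ℤ⟦t⟧ one has the identity (Σ_{m≥0} a_m t^m) · (1 − t) · (1 − q t²) = 1. -/
/-!
An ideal `I` of `Λ ≅ R[ε]` is determined by three pieces of data: its image `I₀ ⊆ R` under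
`ε ↦ 0`, its `ε`-part `I₁ = {v | v ε ∈ I}`, which contains `I₀` because `ε (u + v ε) = u ε`,
and, when `I₀ = (x)` with `x ≠ 0`, the class modulo `I₁` of any `r` with `x + r ε ∈ I`.
The sequence `0 → R/I₁ → Λ/I → R/I₀ → 0` gives `|Λ/I| = |R/I₀| |R/I₁|`. Over a discrete
valuation ring finite index forces `I₀ = (π^a)`, `I₁ = (π^b)` with `b ≤ a`, so the ideals of
index `q^m` are parametrised by `b ≤ m/2` and `r ∈ R/(π^b)`. Hence `a_m = ∑_{b ≤ m/2} q^b`,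
and `∑ a_m t^m = 1 / ((1 - t)(1 - q t²))`.
-/

namespace PowerSeries

open Finset

variable {R : Type*} [CommRing R]

theorem mk_mul_one_sub_C_mul_X_pow (s : ℕ → R) (c : R) (d : ℕ) :
    mk s * (1 - C c * X ^ d) = mk fun n => s n - if d ≤ n then c * s (n - d) else 0 := by
  ext n
  rw [mul_sub, mul_one, mul_left_comm, ← mul_assoc, map_sub, coeff_mul_X_pow', coeff_C_mul]
  simp

theorem mk_sum_range_mul_one_sub_X (c : R) :
    mk (fun m => ∑ i ∈ range (m / 2 + 1), c ^ i) * (1 - X) =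
      mk fun n => if Even n then c ^ (n / 2) else 0 := by
  rw [show (1 - X : R⟦X⟧) = 1 - C 1 * X ^ 1 by simp, mk_mul_one_sub_C_mul_X_pow]
  ext (_ | n)
  · simp
  · rcases Nat.even_or_odd (n + 1) with h | h
    · have : (n + 1) / 2 = n / 2 + 1 := by grind
      simp [h, this, sum_range_succ]
    · have : (n + 1) / 2 = n / 2 := by grind
      simp [Nat.not_even_iff_odd.mpr h, this]

theorem mk_even_pow_mul_one_sub_C_mul_X_sq (c : R) :
    (mk fun n => if Even n then c ^ (n / 2) else 0) * (1 - C c * X ^ 2) = 1 := by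
  rw [mk_mul_one_sub_C_mul_X_pow]
  ext (_ | _ | n)
  · simp
  · simp
  · have : (n + 2) / 2 = n / 2 + 1 := by omega
    simp [this, Nat.even_add, pow_succ']

end PowerSeries

open Polynomial TrivSqZeroExt
open scoped DualNumber

theorem RingEquiv.card_ideals_of_index_eq {A B : Type*} [CommRing A] [CommRing B] (e : A ≃+* B)
    (n : ℕ) : Nat.card {I : Ideal A // Nat.card (A ⧸ I) = n} =
      Nat.card {J : Ideal B // Nat.card (B ⧸ J) = n} :=
  Nat.card_congr <| (e.idealComapOrderIso.toEquiv.subtypeEquiv fun J => by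
    rw [← Nat.card_congr (Ideal.quotientEquiv _ J e
      (Ideal.map_comap_of_surjective _ e.surjective J).symm).toEquiv]
    rfl).symm

namespace DualNumber

variable {R : Type*} [CommRing R]

theorem fst_aeval_eps (p : R[X]) : fst (aeval (ε : R[ε]) p) = p.coeff 0 := by
  induction p using Polynomial.induction_on' with
  | add p q hp hq => simp [hp, hq]
  | monomial n a => cases n <;> simp [coeff_monomial, algebraMap_eq_inl]

theorem snd_aeval_eps (p : R[X]) : snd (aeval (ε : R[ε]) p) = p.coeff 1 := by
  induction p using Polynomial.induction_on' with
  | add p q hp hq => simp [hp, hq]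
  | monomial n a => rcases n with _ | _ | n <;> simp [coeff_monomial, snd_pow, algebraMap_eq_inl]

theorem aeval_eps_surjective : Function.Surjective (aeval (R := R) (ε : R[ε])) := fun y =>
  ⟨C (fst y) + C (snd y) * X, by ext <;> simp [algebraMap_eq_inl]⟩

theorem ker_aeval_eps : RingHom.ker (aeval (R := R) (ε : R[ε])) = Ideal.span {X ^ 2} := by
  ext p
  rw [RingHom.mem_ker, Ideal.mem_span_singleton, X_pow_dvd_iff, TrivSqZeroExt.ext_iff]
  simp only [fst_aeval_eps, snd_aeval_eps, fst_zero, snd_zero]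
  exact ⟨fun h d hd => by interval_cases d <;> simp [h], fun h => ⟨h 0 two_pos, h 1 one_lt_two⟩⟩

end DualNumber

noncomputable def Polynomial.quotientSpanXSqEquivDualNumber (R : Type*) [CommRing R] :
    R[X] ⧸ Ideal.span {(X : R[X]) ^ 2} ≃+* R[ε] :=
  (Ideal.quotEquivOfEq DualNumber.ker_aeval_eps.symm).trans
    (RingHom.quotientKerEquivOfSurjective DualNumber.aeval_eps_surjective)

namespace DualNumber

variable {R : Type*} [CommRing R]

def fstIdeal (I : Ideal R[ε]) : Ideal R := I.map (fstHom R R R)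

def sndIdeal (I : Ideal R[ε]) : Ideal R := (I.restrictScalars R).comap (inrHom R R)

theorem mem_fstIdeal {I : Ideal R[ε]} {u : R} : u ∈ fstIdeal I ↔ ∃ y ∈ I, fst y = u :=
  Ideal.mem_map_iff_of_surjective _ fun u => ⟨inl u, fst_inl R u⟩

theorem mem_sndIdeal {I : Ideal R[ε]} {v : R} : v ∈ sndIdeal I ↔ inr v ∈ I := Iff.rfl

theorem eps_mul (y : R[ε]) : ε * y = inr (fst y) := by
  ext <;> simp

theorem fstIdeal_le_sndIdeal (I : Ideal R[ε]) : fstIdeal I ≤ sndIdeal I := by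
  intro u hu
  obtain ⟨y, hy, rfl⟩ := mem_fstIdeal.mp hu
  rw [mem_sndIdeal, ← eps_mul]
  exact I.mul_mem_left ε hy

theorem card_quotient (I : Ideal R[ε]) :
    Nat.card (R[ε] ⧸ I) = Nat.card (R ⧸ fstIdeal I) * Nat.card (R ⧸ sndIdeal I) := by
  let ψ : R[ε] ⧸ I →+* R ⧸ fstIdeal I :=
    Ideal.quotientMap _ (fstHom R R R : R[ε] →+* R) Ideal.le_comap_map
  have hψ : Function.Surjective ψ := Ideal.quotientMap_surjective fun u => ⟨inl u, fst_inl R u⟩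
  let φ : R →ₗ[R] R[ε] ⧸ I := (Ideal.Quotient.mkₐ R I).toLinearMap ∘ₗ inrHom R R
  have ker_φ : LinearMap.ker φ = sndIdeal I := by
    ext v
    simp [φ, Ideal.Quotient.eq_zero_iff_mem, mem_sndIdeal]
  have range_φ : (LinearMap.range φ : Set (R[ε] ⧸ I)) = ψ.toAddMonoidHom.ker := by
    ext z
    obtain ⟨y, rfl⟩ := Ideal.Quotient.mk_surjective z
    change (∃ v, Ideal.Quotient.mk I (inr v) = Ideal.Quotient.mk I y) ↔
      Ideal.Quotient.mk (fstIdeal I) (fst y) = 0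
    simp only [Ideal.Quotient.eq, Ideal.Quotient.eq_zero_iff_mem, mem_fstIdeal]
    constructor
    · rintro ⟨v, hv⟩
      exact ⟨_, I.neg_mem hv, by simp⟩
    · rintro ⟨z, hz, hzy⟩
      refine ⟨snd y - snd z, ?_⟩
      convert I.neg_mem hz using 1
      ext <;> simp [hzy]
  rw [AddSubgroup.card_eq_card_quotient_mul_card_addSubgroup ψ.toAddMonoidHom.ker,
    Nat.card_congr (QuotientAddGroup.quotientKerEquivOfSurjective ψ.toAddMonoidHom hψ).toEquiv,
    ← ker_φ, Nat.card_congr (φ.quotKerEquivRange).toEquiv]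
  exact congrArg _ (Nat.card_congr (Equiv.setCongr range_φ.symm))

/-- The ideal generated by `x + r ε` and `K ε`. -/
def idealOf (x r : R) (K : Ideal R) (hx : x ∈ K) : Ideal R[ε] where
  carrier := {y | ∃ s, fst y = s * x ∧ snd y - s * r ∈ K}
  zero_mem' := ⟨0, by simp⟩
  add_mem' := by
    rintro y z ⟨s, hs, hsK⟩ ⟨t, ht, htK⟩
    refine ⟨s + t, by simp [hs, ht, add_mul], ?_⟩
    convert K.add_mem hsK htK using 1
    rw [snd_add]
    ring
  smul_mem' := by
    rintro c y ⟨s, hs, hsK⟩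
    refine ⟨fst c * s, by simp [hs, mul_assoc], ?_⟩
    convert K.add_mem (K.mul_mem_left (fst c) hsK) (K.mul_mem_left (snd c * s) hx) using 1
    rw [smul_eq_mul, DualNumber.snd_mul, hs]
    ring

variable {x r : R} {K : Ideal R} {hx : x ∈ K}

theorem mem_idealOf {y : R[ε]} : y ∈ idealOf x r K hx ↔ ∃ s, fst y = s * x ∧ snd y - s * r ∈ K :=
  Iff.rfl

theorem fstIdeal_idealOf : fstIdeal (idealOf x r K hx) = Ideal.span {x} := by
  ext u
  rw [mem_fstIdeal, Ideal.mem_span_singleton']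
  constructor
  · rintro ⟨y, ⟨s, hs, -⟩, rfl⟩
    exact ⟨s, hs.symm⟩
  · rintro ⟨s, rfl⟩
    exact ⟨inl (s * x) + inr (s * r), ⟨s, by simp, by simp⟩, by simp⟩

theorem sndIdeal_idealOf [IsDomain R] (hx0 : x ≠ 0) : sndIdeal (idealOf x r K hx) = K := by
  ext v
  rw [mem_sndIdeal, mem_idealOf]
  simp only [fst_inr, snd_inr]
  constructor
  · rintro ⟨s, hs, hsK⟩
    obtain rfl : s = 0 := (mul_eq_zero.mp hs.symm).resolve_right hx0
    simpa using hsK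
  · exact fun hv => ⟨0, by simp, by simpa using hv⟩

theorem idealOf_eq_idealOf_iff [IsDomain R] (hx0 : x ≠ 0) {r' : R} :
    idealOf x r K hx = idealOf x r' K hx ↔ r - r' ∈ K := by
  constructor
  · intro h
    have hmem : inl x + inr r ∈ idealOf x r' K hx := h ▸ ⟨1, by simp, by simp⟩
    obtain ⟨s, hs, hsK⟩ := hmem
    obtain rfl : s = 1 := by
      simpa using (mul_left_injective₀ hx0 (by simpa using hs.symm) : s = 1)
    simpa using hsK
  · intro h
    ext y
    simp only [mem_idealOf]
    refine exists_congr fun s => and_congr_right fun _ => ?_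
    have : snd y - s * r = snd y - s * r' - s * (r - r') := by ring
    rw [this, K.sub_mem_iff_left (K.mul_mem_left s h)]

theorem exists_eq_idealOf {I : Ideal R[ε]} (h0 : fstIdeal I = Ideal.span {x})
    (h1 : sndIdeal I = K) : ∃ r, I = idealOf x r K hx := by
  obtain ⟨g, hg, hgx⟩ := mem_fstIdeal.mp (h0 ▸ Ideal.mem_span_singleton_self x)
  refine ⟨snd g, le_antisymm (fun y hy => ?_) (fun y ⟨s, hs, hsK⟩ => ?_)⟩
  · obtain ⟨s, hs⟩ := Ideal.mem_span_singleton'.mp (h0 ▸ mem_fstIdeal.mpr ⟨y, hy, rfl⟩)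
    refine ⟨s, hs.symm, h1 ▸ mem_sndIdeal.mpr ?_⟩
    convert I.sub_mem hy (I.mul_mem_left (inl s) hg) using 1
    ext <;> simp [hgx, hs]
  · have : y = inl s * g + inr (snd y - s * snd g) := by ext <;> simp [hgx, hs]
    rw [this]
    exact I.add_mem (I.mul_mem_left _ hg) (mem_sndIdeal.mp (h1 ▸ hsK))

theorem card_ideals_fstIdeal_sndIdeal_eq [IsDomain R] (hx : x ∈ K) (hx0 : x ≠ 0) :
    Nat.card {I : Ideal R[ε] // fstIdeal I = Ideal.span {x} ∧ sndIdeal I = K} =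
      Nat.card (R ⧸ K) := by
  let f (r : R) : {I : Ideal R[ε] // fstIdeal I = Ideal.span {x} ∧ sndIdeal I = K} :=
    ⟨idealOf x r K hx, fstIdeal_idealOf, sndIdeal_idealOf hx0⟩
  have hf : Function.Surjective f := fun ⟨I, h0, h1⟩ =>
    (exists_eq_idealOf (hx := hx) h0 h1).imp fun r hr => Subtype.ext hr.symm
  refine Nat.card_congr ((Setoid.quotientKerEquivOfSurjective f hf).symm.trans
    (Quotient.congrRight fun r r' => ?_))
  rw [Setoid.ker_def, Subtype.ext_iff, idealOf_eq_idealOf_iff hx0]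
  exact (Submodule.quotientRel_def K).symm

end DualNumber

section Uniformizer

variable {R : Type*} [CommRing R] {π : R}

theorem Irreducible.one_lt_card_quotient (hπ : Irreducible π) [Finite (R ⧸ Ideal.span {π})] :
    1 < Nat.card (R ⧸ Ideal.span {π}) :=
  have : Nontrivial (R ⧸ Ideal.span {π}) :=
    Ideal.Quotient.nontrivial_iff.mpr (by simpa using hπ.not_isUnit)
  Finite.one_lt_card

variable [IsDomain R]

theorem Irreducible.span_pow_le_span_pow_iff (hπ : Irreducible π) {a b : ℕ} :
    Ideal.span {π ^ a} ≤ Ideal.span {π ^ b} ↔ b ≤ a := by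
  rw [Ideal.span_singleton_le_span_singleton, pow_dvd_pow_iff hπ.ne_zero hπ.not_isUnit]

variable [IsDiscreteValuationRing R]

theorem Irreducible.card_quotient_span_pow (hπ : Irreducible π) (k : ℕ) :
    Nat.card (R ⧸ Ideal.span {π ^ k}) = Nat.card (R ⧸ Ideal.span {π}) ^ k := by
  have : (Ideal.span {π}).IsPrime := (Ideal.span_singleton_prime hπ.ne_zero).mpr hπ.prime
  have hne : Ideal.span {π} ≠ ⊥ := by simpa using hπ.ne_zero
  simpa [Ideal.span_singleton_pow, Submodule.cardQuot_apply] using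
    cardQuot_pow_of_prime hne (i := k)

theorem Irreducible.exists_eq_span_pow (hπ : Irreducible π) (J : Ideal R) [Finite (R ⧸ J)] :
    ∃ k, J = Ideal.span {π ^ k} := by
  refine IsDiscreteValuationRing.ideal_eq_span_pow_irreducible ?_ hπ
  rintro rfl
  have : Finite R := .of_equiv _ (RingEquiv.quotientBot R).toEquiv
  exact IsDiscreteValuationRing.not_a_field R
    (IsLocalRing.isField_iff_maximalIdeal_eq.mp (Finite.isField_of_domain R))

end Uniformizer

namespace DualNumber

variable {R : Type*} [CommRing R] [IsDomain R] [IsDiscreteValuationRing R] {π : R}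
  (hπ : Irreducible π) {q : ℕ} (hq : Nat.card (R ⧸ Ideal.span {π}) = q)
include hπ hq

theorem exists_span_pow_of_card_quotient_eq_pow [Finite (R ⧸ Ideal.span {π})] {m : ℕ}
    {I : Ideal R[ε]} (hI : Nat.card (R[ε] ⧸ I) = q ^ m) :
    ∃ b ≤ m / 2, fstIdeal I = Ideal.span {π ^ (m - b)} ∧ sndIdeal I = Ideal.span {π ^ b} := by
  have hq1 : 1 < q := hq ▸ hπ.one_lt_card_quotient
  rw [card_quotient] at hI
  have hfin : Nat.card (R ⧸ fstIdeal I) ≠ 0 ∧ Nat.card (R ⧸ sndIdeal I) ≠ 0 := by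
    rw [← mul_ne_zero_iff, hI]; positivity
  have := Nat.finite_of_card_ne_zero hfin.1
  have := Nat.finite_of_card_ne_zero hfin.2
  obtain ⟨a, ha⟩ := hπ.exists_eq_span_pow (fstIdeal I)
  obtain ⟨b, hb⟩ := hπ.exists_eq_span_pow (sndIdeal I)
  have hba : b ≤ a := hπ.span_pow_le_span_pow_iff.mp (ha ▸ hb ▸ fstIdeal_le_sndIdeal I)
  have hab : a + b = m := by
    rw [ha, hb, hπ.card_quotient_span_pow, hπ.card_quotient_span_pow, hq, ← pow_add] at hI
    exact Nat.pow_right_injective hq1 hI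
  exact ⟨b, by omega, by rw [ha, ← hab, Nat.add_sub_cancel], hb⟩

theorem card_ideals_of_index [Finite (R ⧸ Ideal.span {π})] (m : ℕ) :
    Nat.card {I : Ideal R[ε] // Nat.card (R[ε] ⧸ I) = q ^ m} =
      ∑ b ∈ Finset.range (m / 2 + 1), q ^ b := by
  have hcard (k : ℕ) : Nat.card (R ⧸ Ideal.span {π ^ k}) = q ^ k := by
    rw [hπ.card_quotient_span_pow, hq]
  let F (b : Fin (m / 2 + 1)) :=
    {I : Ideal R[ε] //
      fstIdeal I = Ideal.span {π ^ (m - b : ℕ)} ∧ sndIdeal I = Ideal.span {π ^ (b : ℕ)}}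
  have card_F (b : Fin (m / 2 + 1)) : Nat.card (F b) = q ^ (b : ℕ) :=
    (card_ideals_fstIdeal_sndIdeal_eq
      (hπ.span_pow_le_span_pow_iff.mpr (by omega) (Ideal.mem_span_singleton_self _))
      (pow_ne_zero _ hπ.ne_zero)).trans (hcard b)
  have (b : Fin (m / 2 + 1)) : Finite (F b) := by
    have := (hq ▸ hπ.one_lt_card_quotient : 1 < q)
    exact Nat.finite_of_card_ne_zero (by rw [card_F]; positivity)
  let G (p : Σ b, F b) : {I : Ideal R[ε] // Nat.card (R[ε] ⧸ I) = q ^ m} :=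
    ⟨p.2.1, by
      rw [card_quotient, p.2.2.1, p.2.2.2, hcard, hcard, ← pow_add, Nat.sub_add_cancel (by omega)]⟩
  have hG : Function.Bijective G := by
    refine ⟨fun ⟨b, I, hI⟩ ⟨b', I', hI'⟩ h => ?_, fun ⟨I, hI⟩ => ?_⟩
    · obtain rfl : I = I' := congrArg Subtype.val h
      obtain rfl : b = b' := Fin.ext <| le_antisymm
        (hπ.span_pow_le_span_pow_iff.mp (hI'.2 ▸ hI.2).le)
        (hπ.span_pow_le_span_pow_iff.mp (hI.2 ▸ hI'.2).le)
      rfl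
    · obtain ⟨b, hb, hIb⟩ := exists_span_pow_of_card_quotient_eq_pow hπ hq hI
      exact ⟨⟨⟨b, by omega⟩, I, hIb⟩, rfl⟩
  rw [← Nat.card_congr (Equiv.ofBijective G hG), Nat.card_sigma, ← Fin.sum_univ_eq_sum_range]
  exact Finset.sum_congr rfl fun b _ => card_F b

end DualNumber

/-- Let `R` be a discrete valuation ring with uniformizer `π`
and finite residue field of cardinality `q`, and let `Λ = R[x]/(x² R[x])`.
With `a_m` the number of ideals of `Λ` of index `q^m`, one has in `ℤ⟦t⟧` the
identity `(∑ a_m t^m)·(1 - t)·(1 - q t²) = 1`. -/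
theorem stmt6 (R : Type*) [CommRing R] [IsDomain R] [IsDiscreteValuationRing R]
    (π : R) (hπ : IsLocalRing.maximalIdeal R = Ideal.span {π})
    (q : ℕ) (hres : Finite (R ⧸ Ideal.span {π}))
    (hq : Nat.card (R ⧸ Ideal.span {π}) = q)
    (a : ℕ → ℕ)
    (ha : ∀ m : ℕ, a m = Nat.card {I : Ideal (R[X] ⧸ Ideal.span {(X : R[X]) ^ 2}) //
        Nat.card ((R[X] ⧸ Ideal.span {(X : R[X]) ^ 2}) ⧸ I) = q ^ m}) :
    (PowerSeries.mk fun m => (a m : ℤ)) * (1 - PowerSeries.X) *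
        (1 - (q : PowerSeries ℤ) * PowerSeries.X ^ 2) = 1 := by
  have hirr : Irreducible π := (IsDiscreteValuationRing.irreducible_iff_uniformizer π).mpr hπ
  have ha' (m : ℕ) : (a m : ℤ) = ∑ i ∈ Finset.range (m / 2 + 1), (q : ℤ) ^ i := by
    rw [ha, (Polynomial.quotientSpanXSqEquivDualNumber R).card_ideals_of_index_eq,
      DualNumber.card_ideals_of_index hirr hq]
    norm_cast
  simp_rw [ha', PowerSeries.mk_sum_range_mul_one_sub_X, ← map_natCast PowerSeries.C]
  exact PowerSeries.mk_even_pow_mul_one_sub_C_mul_X_sq _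
end

section
/- Let R be a nontrivial commutative ring and let n ≥ 2 be a natural number. Let A = J − 1 in the ring of n×n matrices over R, where J is the all-ones matrix. Then the R-subalgebra of n×n matrices generated by A equals the R-span of {1, A}, and it is isomorphic as an R-algebra to R[x]/(x(x−n)R[x]). -/
open Polynomial

/-!
The all-ones matrix `J` satisfies `J * J = n • J`, and for `n ≥ 2` the matrices `1` and `J` are
linearly independent over any ring. The first fact makes `span {1, A}` closed under
multiplication, so it is the subalgebra generated by `A = J - 1`; this subalgebra is also the one
generated by `J`. A polynomial killing `J`, reduced modulo the monic quadratic `X * (X - n)`,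
becomes a polynomial of degree at most one killing `J`, hence zero by linear independence. So the
kernel of evaluation at `J` is `(X * (X - n))`, and the first isomorphism theorem concludes.
-/

namespace Algebra

variable {R S : Type*} [CommRing R] [Ring S] [Algebra R S]

theorem adjoin_singleton_sub_one (a : S) : adjoin R {a - 1} = adjoin R {a} :=
  le_antisymm (adjoin_singleton_le (sub_mem (self_mem_adjoin_singleton R a) (one_mem _)))
    (adjoin_singleton_le (by
      simpa using add_mem (self_mem_adjoin_singleton R (a - 1)) (one_mem _)))

theorem adjoin_singleton_toSubmodule_eq_span_pair {a : S}
    (ha : a * a ∈ Submodule.span R {1, a}) :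
    Subalgebra.toSubmodule (adjoin R {a}) = Submodule.span R {1, a} := by
  have hmul : Submodule.span R {1, a} * Submodule.span R {1, a} ≤ Submodule.span R {1, a} := by
    rw [Submodule.span_mul_span, Submodule.span_le]
    rintro _ ⟨x, hx, y, hy, rfl⟩
    rcases hx with rfl | rfl <;> rcases hy with rfl | rfl
    all_goals first
      | exact ha
      | simp only [one_mul, mul_one]; exact Submodule.subset_span (by simp)
  apply le_antisymm
  · intro x hx
    induction hx using adjoin_induction with
    | mem x hx => exact Submodule.subset_span (by simp_all)
    | algebraMap r =>
      rw [algebraMap_eq_smul_one]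
      exact Submodule.smul_mem _ r (Submodule.subset_span (by simp))
    | add x y _ _ hx hy => exact add_mem hx hy
    | mul x y _ _ hx hy => exact hmul (Submodule.mul_mem_mul hx hy)
  · rw [Submodule.span_le, Set.insert_subset_iff, Set.singleton_subset_iff]
    exact ⟨(adjoin R {a}).one_mem, self_mem_adjoin_singleton R a⟩

end Algebra

namespace Polynomial

variable {R S : Type*} [CommRing R] [Ring S] [Algebra R S]

theorem eq_zero_of_degree_le_one_of_aeval_eq_zero {a : S} (hli : LinearIndependent R ![1, a])
    {q : R[X]} (hq : q.degree ≤ 1) (h : aeval a q = 0) : q = 0 := by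
  rw [eq_X_add_C_of_degree_le_one hq] at h ⊢
  obtain ⟨h0, h1⟩ := LinearIndependent.pair_iff.mp hli (q.coeff 0) (q.coeff 1)
    (by simpa [Algebra.algebraMap_eq_smul_one, add_comm] using h)
  simp [h0, h1]

variable [Nontrivial R]

theorem ker_aeval_eq_span_singleton {p : R[X]} (hp : p.Monic) {a : S} (hpa : aeval a p = 0)
    (hmin : ∀ q : R[X], q.degree < p.degree → aeval a q = 0 → q = 0) :
    RingHom.ker (aeval a) = Ideal.span {p} := by
  ext q
  rw [RingHom.mem_ker, Ideal.mem_span_singleton, ← modByMonic_eq_zero_iff_dvd hp,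
    ← aeval_modByMonic_eq_self_of_root hpa]
  exact ⟨hmin _ (degree_modByMonic_lt q hp), fun h => by rw [h, map_zero]⟩

noncomputable def quotientSpanAlgEquivAdjoin {p : R[X]} (hp : p.Monic) {a : S}
    (hpa : aeval a p = 0) (hmin : ∀ q : R[X], q.degree < p.degree → aeval a q = 0 → q = 0) :
    (R[X] ⧸ Ideal.span {p}) ≃ₐ[R] Algebra.adjoin R {a} :=
  (Ideal.quotientEquivAlgOfEq R (ker_aeval_eq_span_singleton hp hpa hmin).symm).trans <|
    (Ideal.quotientKerEquivRange (aeval a : R[X] →ₐ[R] S)).trans <|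
      Subalgebra.equivOfEq _ _ (Algebra.adjoin_singleton_eq_range_aeval R a).symm

end Polynomial

namespace Matrix

variable {ι R : Type*} [CommRing R]

theorem of_one_mul_self [Fintype ι] :
    (of fun _ _ => 1 : Matrix ι ι R) * (of fun _ _ => 1) =
      (Fintype.card ι : R) • (of fun _ _ => 1) := by
  ext i j
  simp [mul_apply]

theorem linearIndependent_one_of_one [DecidableEq ι] [Nontrivial ι] :
    LinearIndependent R ![(1 : Matrix ι ι R), of fun _ _ => 1] := by
  obtain ⟨i, j, hij⟩ := exists_pair_ne ι
  refine LinearIndependent.pair_iff.mpr fun s t h => ?_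
  have hii := congrFun (congrFun h i) i
  have hij' := congrFun (congrFun h i) j
  simp [hij] at hii hij'
  exact ⟨by linear_combination hii - hij', hij'⟩

theorem of_one_sub_one_mul_self_mem_span [Fintype ι] [DecidableEq ι] :
    ((of fun _ _ => (1 : R)) - 1 : Matrix ι ι R) * ((of fun _ _ => 1) - 1) ∈
      Submodule.span R {1, (of fun _ _ => 1) - 1} := by
  refine Submodule.mem_span_pair.mpr ⟨Fintype.card ι - 1, Fintype.card ι - 2, ?_⟩
  rw [sub_mul, mul_sub, mul_sub, of_one_mul_self, one_mul, mul_one, mul_one]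
  module

end Matrix

/-- Let `R` be a nontrivial commutative ring, `n ≥ 2`, and
`A = J - 1` in the `n×n` matrices over `R` (`J` the all-ones matrix).  Then the
`R`-subalgebra generated by `A` equals the `R`-span of `{1, A}`, and it is
isomorphic as an `R`-algebra to `R[x]/(x(x-n)R[x])`. -/
theorem stmt10 (R : Type*) [CommRing R] [Nontrivial R] (n : ℕ) (hn : 2 ≤ n) :
    (Subalgebra.toSubmodule
        (Algebra.adjoin R
          {(Matrix.of fun _ _ => (1 : R)) - (1 : Matrix (Fin n) (Fin n) R)}) =
      Submodule.span R
        {(1 : Matrix (Fin n) (Fin n) R),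
          (Matrix.of fun _ _ => (1 : R)) - (1 : Matrix (Fin n) (Fin n) R)}) ∧
    Nonempty
      ((R[X] ⧸ Ideal.span {X * (X - C (n : R))}) ≃ₐ[R]
        (Algebra.adjoin R
          {(Matrix.of fun _ _ => (1 : R)) - (1 : Matrix (Fin n) (Fin n) R)})) := by
  have : Nontrivial (Fin n) := Fin.nontrivial_iff_two_le.mpr hn
  refine ⟨Algebra.adjoin_singleton_toSubmodule_eq_span_pair
    Matrix.of_one_sub_one_mul_self_mem_span, ?_⟩
  set J : Matrix (Fin n) (Fin n) R := Matrix.of fun _ _ => 1 with hJ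
  have hJJ : J * J = (n : R) • J := by rw [hJ, Matrix.of_one_mul_self, Fintype.card_fin]
  have hdeg : (X * (X - C (n : R))).degree = 2 := by
    rw [(monic_X_sub_C _).degree_mul, degree_X, degree_X_sub_C]
    rfl
  have hroot : aeval J (X * (X - C (n : R))) = 0 := by
    rw [map_mul, map_sub, aeval_X, aeval_C, Algebra.algebraMap_eq_smul_one, mul_sub,
      mul_smul_comm, mul_one, hJJ, sub_self]
  have hmin : ∀ q : R[X], q.degree < (X * (X - C (n : R))).degree → aeval J q = 0 → q = 0 := by
    rw [hdeg]
    have hli : LinearIndependent R ![1, J] := Matrix.linearIndependent_one_of_one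
    exact fun q hq => eq_zero_of_degree_le_one_of_aeval_eq_zero hli (Order.le_of_lt_succ hq)
  rw [Algebra.adjoin_singleton_sub_one]
  exact ⟨quotientSpanAlgEquivAdjoin (monic_X.mul (monic_X_sub_C _)) hroot hmin⟩
end

section
/- Let Λ₁ and Λ₂ be rings whose underlying additive groups are free ℤ-modules of finite rank, and for a ring Λ and positive integer N let a_N(Λ) denote the number of left ideals I of Λ for which the quotient Λ/I has exactly N elements. Then for every positive integer N, a_N(Λ₁ × Λ₂) = Σ_{d | N} a_d(Λ₁) · a_{N/d}(Λ₂), where the sum runs over positive divisors d of N. -/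
/-- `a_N(Λ)`: the number of left ideals `I` of the ring `Λ` such that the
quotient `Λ/I` has exactly `N` elements. -/
noncomputable def leftIdealCount (Λ : Type*) [Ring Λ] (N : ℕ) : ℕ :=
  Nat.card {I : Ideal Λ // Nat.card (Λ ⧸ I) = N}

/-!
An ideal of `Λ₁ × Λ₂` is a product `I × J`, with quotient `(Λ₁ ⧸ I) × (Λ₂ ⧸ J)`, so the ideals
of index `N` correspond to pairs of ideals whose indices multiply to `N`; sorting the pairs by the
index `d` of `I` gives the divisor sum. All counts involved are finite (which matters, since
`Nat.card` of an infinite type is `0`): a left ideal of index `d` contains `d • Λ`, and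
`Λ ⧸ d • Λ` is a finitely generated torsion group, hence finite.
-/

namespace AddSubgroup

variable {M : Type*} [AddCommGroup M]

theorem range_nsmul_index_le (H : AddSubgroup M) :
    (nsmulAddMonoidHom (α := M) H.index).range ≤ H := by
  rintro _ ⟨x, rfl⟩
  exact H.nsmul_index_mem x

theorem finite_quotient_range_nsmul [AddGroup.FG M] {n : ℕ} (hn : n ≠ 0) :
    Finite (M ⧸ (nsmulAddMonoidHom (α := M) n).range) := by
  refine AddCommGroup.finite_of_fg_isAddTorsion _ fun x ↦ ?_
  induction x using QuotientAddGroup.induction_on with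
  | H y =>
    refine isOfFinAddOrder_iff_nsmul_eq_zero.mpr ⟨n, Nat.pos_of_ne_zero hn, ?_⟩
    rw [← QuotientAddGroup.mk_nsmul, QuotientAddGroup.eq_zero_iff]
    exact ⟨y, rfl⟩

theorem finite_subtype_index_eq [AddGroup.FG M] {n : ℕ} (hn : n ≠ 0) :
    Finite {H : AddSubgroup M // H.index = n} := by
  let K := (nsmulAddMonoidHom (α := M) n).range
  have := finite_quotient_range_nsmul (M := M) hn
  have : Finite {H : AddSubgroup M // K ≤ H} :=
    .of_equiv _ (QuotientAddGroup.comapMk'OrderIso K).toEquiv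
  exact Finite.of_injective _ (Subtype.impEmbedding _ _
    fun (H : AddSubgroup M) (hH : H.index = n) ↦ hH ▸ H.range_nsmul_index_le).injective

end AddSubgroup

theorem Ideal.finite_card_quotient_eq (Λ : Type*) [Ring Λ] [Module.Finite ℤ Λ] {n : ℕ}
    (hn : n ≠ 0) : Finite {I : Ideal Λ // Nat.card (Λ ⧸ I) = n} := by
  have := Module.Finite.iff_addGroup_fg.mp ‹Module.Finite ℤ Λ›
  have := AddSubgroup.finite_subtype_index_eq (M := Λ) hn
  exact Finite.of_injective
    (fun I ↦ (⟨I.1.toAddSubgroup, I.2⟩ : {H : AddSubgroup Λ // H.index = n}))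
    fun _ _ h ↦ Subtype.ext (Submodule.toAddSubgroup_injective (congrArg Subtype.val h))

theorem Ideal.card_quotient_prod {R S : Type*} [Ring R] [Ring S] (I : Ideal R) (J : Ideal S) :
    Nat.card ((R × S) ⧸ I.prod J) = Nat.card (R ⧸ I) * Nat.card (S ⧸ J) := by
  rw [← Nat.card_prod]
  exact Nat.card_congr (QuotientAddGroup.prodEquiv I.toAddSubgroup J.toAddSubgroup)

theorem Ideal.card_quotient_eq_mul_idealProdEquiv {R S : Type*} [Ring R] [Ring S]
    (I : Ideal (R × S)) :
    Nat.card ((R × S) ⧸ I) =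
      Nat.card (R ⧸ (idealProdEquiv I).1) * Nat.card (S ⧸ (idealProdEquiv I).2) := by
  conv_lhs => rw [I.ideal_prod_eq]
  exact card_quotient_prod _ _

section DivisorSum

variable {α β : Type*} (f : α → ℕ) (g : β → ℕ) {N : ℕ}

def mulFiberEquivSigmaDivisorsAntidiagonal (hN : N ≠ 0) :
    {p : α × β // f p.1 * g p.2 = N} ≃
      Σ q : N.divisorsAntidiagonal, {a // f a = q.1.1} × {b // g b = q.1.2} where
  toFun p := ⟨⟨(f p.1.1, g p.1.2), Nat.mem_divisorsAntidiagonal.mpr ⟨p.2, hN⟩⟩,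
    ⟨p.1.1, rfl⟩, ⟨p.1.2, rfl⟩⟩
  invFun x := ⟨(x.2.1, x.2.2), by
    rw [x.2.1.2, x.2.2.2]; exact (Nat.mem_divisorsAntidiagonal.mp x.1.2).1⟩
  left_inv _ := rfl
  right_inv := by
    rintro ⟨⟨⟨d, e⟩, hq⟩, ⟨a, ha⟩, ⟨b, hb⟩⟩
    obtain rfl : f a = d := ha
    obtain rfl : g b = e := hb
    rfl

theorem Nat.card_mul_eq_sum_divisors (hN : N ≠ 0)
    (hf : ∀ d ≠ 0, Finite {a // f a = d}) (hg : ∀ d ≠ 0, Finite {b // g b = d}) :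
    Nat.card {p : α × β // f p.1 * g p.2 = N} =
      ∑ d ∈ N.divisors, Nat.card {a // f a = d} * Nat.card {b // g b = N / d} := by
  have (q : N.divisorsAntidiagonal) : Finite ({a // f a = q.1.1} × {b // g b = q.1.2}) := by
    have ⟨hq, _⟩ := Nat.mem_divisorsAntidiagonal.mp q.2
    have := hf q.1.1 (left_ne_zero_of_mul (hq ▸ hN))
    have := hg q.1.2 (right_ne_zero_of_mul (hq ▸ hN))
    infer_instance
  rw [Nat.card_congr (mulFiberEquivSigmaDivisorsAntidiagonal f g hN), Nat.card_sigma,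
    ← Nat.sum_divisorsAntidiagonal
      fun d e ↦ Nat.card {a // f a = d} * Nat.card {b // g b = e},
    ← Finset.sum_coe_sort N.divisorsAntidiagonal]
  simp only [Nat.card_prod]

end DivisorSum

theorem stmt12_general (Λ₁ Λ₂ : Type*) [Ring Λ₁] [Ring Λ₂]
    [Module.Finite ℤ Λ₁]
    [Module.Finite ℤ Λ₂]
    (N : ℕ) (hN : 0 < N) :
    leftIdealCount (Λ₁ × Λ₂) N =
      ∑ d ∈ N.divisors, leftIdealCount Λ₁ d * leftIdealCount Λ₂ (N / d) := by
  calc leftIdealCount (Λ₁ × Λ₂) N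
      = Nat.card {p : Ideal Λ₁ × Ideal Λ₂ //
          Nat.card (Λ₁ ⧸ p.1) * Nat.card (Λ₂ ⧸ p.2) = N} :=
        Nat.card_congr <| Ideal.idealProdEquiv.toEquiv.subtypeEquiv fun I ↦ by
          rw [Ideal.card_quotient_eq_mul_idealProdEquiv]; rfl
    _ = _ := Nat.card_mul_eq_sum_divisors _ _ hN.ne'
        (fun _ ↦ Ideal.finite_card_quotient_eq Λ₁) fun _ ↦ Ideal.finite_card_quotient_eq Λ₂

/-- Let `Λ₁`, `Λ₂` be rings whose additive groups are free
`ℤ`-modules of finite rank.  Then for every positive integer `N`,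
`a_N(Λ₁ × Λ₂) = ∑_{d ∣ N} a_d(Λ₁) · a_{N/d}(Λ₂)`. -/
theorem stmt12 (Λ₁ Λ₂ : Type*) [Ring Λ₁] [Ring Λ₂]
    [Module.Free ℤ Λ₁] [Module.Finite ℤ Λ₁]
    [Module.Free ℤ Λ₂] [Module.Finite ℤ Λ₂]
    (N : ℕ) (hN : 0 < N) :
    leftIdealCount (Λ₁ × Λ₂) N =
      ∑ d ∈ N.divisors, leftIdealCount Λ₁ d * leftIdealCount Λ₂ (N / d) :=
  stmt12_general Λ₁ Λ₂ N hN
end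

section
/- Let Λ be a ring whose underlying additive group is a free ℤ-module of finite rank, and for a positive integer N let a_N(Λ) denote the number of left ideals I of Λ for which Λ/I has exactly N elements. Then the function N ↦ a_N(Λ) is multiplicative on coprime arguments: for all positive integers m and n with gcd(m,n) = 1, a_{mn}(Λ) = a_m(Λ) · a_n(Λ). -/
/-!
Left ideals are submodules of `Λ` over itself, and the count is multiplicative for the
submodules of any module `M`. If `p` has index `mn` with `m`, `n` coprime, then `p + mM` and
`p + nM` are comaximal with intersection `p`, so by the Chinese remainder theorem their indices
multiply to `mn`; as `M/(p + mM)` is killed by `m`, its order is prime to `n`, which forces the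
indices to be `m` and `n`. Conversely two submodules of coprime indices `m`, `n` are comaximal,
and `(q, r) ↦ q ∩ r` inverts `p ↦ (p + mM, p + nM)`.
-/
theorem Nat.eq_of_mul_eq_mul_of_coprime {a b m n : ℕ} (hab : a * b = m * n) (ha : a.Coprime n)
    (hb : b.Coprime m) : a = m :=
  Nat.dvd_antisymm (ha.dvd_of_dvd_mul_right ⟨b, hab.symm⟩)
    (hb.symm.dvd_of_dvd_mul_right (hab ▸ Nat.dvd_mul_right m n))

theorem Nat.Coprime.card_coprime_of_nsmul_eq_zero {G : Type*} [AddCommGroup G] [Finite G]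
    {m n : ℕ} (h : m.Coprime n) (hG : ∀ g : G, m • g = 0) : (Nat.card G).Coprime n :=
  (h.pow_left _).coprime_dvd_left (card_dvd_exponent_nsmul_rank' G hG)

namespace Submodule

variable {R M : Type*} [Ring R] [AddCommGroup M] [Module R M] {p q : Submodule R M} {m n : ℕ}

theorem mem_of_nsmul_mem_of_coprime (h : m.Coprime n) {x : M} (hm : m • x ∈ p)
    (hn : n • x ∈ p) : x ∈ p := by
  have hx : x = m.gcdA n • m • x + m.gcdB n • n • x := by
    rw [← natCast_zsmul, ← natCast_zsmul, smul_smul, smul_smul, ← add_smul, mul_comm,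
      mul_comm _ (n : ℤ), ← Nat.gcd_eq_gcd_ab, h, Nat.cast_one, one_smul]
  rw [hx]
  exact add_mem (zsmul_mem hm _) (zsmul_mem hn _)

variable (R M) in
def nsmulRange (m : ℕ) : Submodule R M :=
  LinearMap.range (m • LinearMap.id)

theorem mem_nsmulRange {x : M} : x ∈ nsmulRange R M m ↔ ∃ y, m • y = x :=
  LinearMap.mem_range

theorem nsmul_mem_nsmulRange (m : ℕ) (x : M) : m • x ∈ nsmulRange R M m :=
  mem_nsmulRange.2 ⟨x, rfl⟩

theorem nsmulRange_le_of_card_quotient (hp : Nat.card (M ⧸ p) = m) :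
    nsmulRange R M m ≤ p := by
  rintro _ ⟨x, rfl⟩
  rw [← Quotient.mk_eq_zero, LinearMap.smul_apply, LinearMap.id_apply, Quotient.mk_smul, ← hp]
  exact card_nsmul_eq_zero'

theorem sup_eq_top_of_coprime (h : m.Coprime n) (hp : nsmulRange R M m ≤ p)
    (hq : nsmulRange R M n ≤ q) : p ⊔ q = ⊤ :=
  eq_top_iff'.2 fun x => mem_of_nsmul_mem_of_coprime h
    (mem_sup_left (hp (nsmul_mem_nsmulRange m x)))
    (mem_sup_right (hq (nsmul_mem_nsmulRange n x)))

theorem mkQ_prod_mkQ_surjective (hpq : p ⊔ q = ⊤) : Function.Surjective (p.mkQ.prod q.mkQ) := by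
  rintro ⟨a, b⟩
  obtain ⟨x, rfl⟩ := p.mkQ_surjective a
  obtain ⟨y, rfl⟩ := q.mkQ_surjective b
  obtain ⟨u, hu, v, hv, huv⟩ := mem_sup.1 (hpq ▸ mem_top : x - y ∈ p ⊔ q)
  refine ⟨x - u, Prod.ext ((Quotient.eq p).2 ?_) ((Quotient.eq q).2 ?_)⟩
  · simpa using p.neg_mem hu
  · rwa [sub_right_comm, ← huv, add_sub_cancel_left]

theorem card_quotient_inf_of_sup_eq_top (hpq : p ⊔ q = ⊤) :
    Nat.card (M ⧸ p ⊓ q) = Nat.card (M ⧸ p) * Nat.card (M ⧸ q) := by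
  have hker : LinearMap.ker (p.mkQ.prod q.mkQ) = p ⊓ q := by
    rw [LinearMap.ker_prod, ker_mkQ, ker_mkQ]
  rw [← Nat.card_prod, ← hker]
  exact Nat.card_congr ((p.mkQ.prod q.mkQ).quotKerEquivOfSurjective
    (mkQ_prod_mkQ_surjective hpq)).toEquiv

theorem nsmul_mem_of_mem_sup_nsmulRange {k : ℕ} (hp : nsmulRange R M (k * m) ≤ p) {x : M}
    (hx : x ∈ p ⊔ nsmulRange R M m) : k • x ∈ p := by
  obtain ⟨y, hy, _, hz, rfl⟩ := mem_sup.1 hx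
  obtain ⟨z, rfl⟩ := mem_nsmulRange.1 hz
  rw [smul_add, smul_smul]
  exact add_mem (nsmul_mem hy k) (hp (nsmul_mem_nsmulRange _ z))

theorem sup_nsmulRange_inf_sup_nsmulRange (h : m.Coprime n)
    (hp : nsmulRange R M (m * n) ≤ p) : (p ⊔ nsmulRange R M m) ⊓ (p ⊔ nsmulRange R M n) = p :=
  le_antisymm
    (fun _ hx => mem_of_nsmul_mem_of_coprime h (nsmul_mem_of_mem_sup_nsmulRange hp hx.2)
      (nsmul_mem_of_mem_sup_nsmulRange (mul_comm m n ▸ hp) hx.1))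
    (le_inf le_sup_left le_sup_left)

theorem inf_sup_nsmulRange (h : m.Coprime n) (hp : nsmulRange R M m ≤ p)
    (hq : nsmulRange R M n ≤ q) : p ⊓ q ⊔ nsmulRange R M m = p :=
  le_antisymm (sup_le inf_le_left hp) fun x hx => mem_of_nsmul_mem_of_coprime h
    (mem_sup_right (nsmul_mem_nsmulRange m x))
    (mem_sup_left ⟨nsmul_mem hx n, hq (nsmul_mem_nsmulRange n x)⟩)

theorem coprime_card_quotient [Finite (M ⧸ p)] (h : m.Coprime n)
    (hp : nsmulRange R M m ≤ p) : (Nat.card (M ⧸ p)).Coprime n :=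
  h.card_coprime_of_nsmul_eq_zero fun x => by
    obtain ⟨x, rfl⟩ := p.mkQ_surjective x
    rw [← map_nsmul, mkQ_apply, Quotient.mk_eq_zero]
    exact hp (nsmul_mem_nsmulRange m x)

theorem card_quotient_sup_nsmulRange (hmn : m * n ≠ 0) (h : m.Coprime n)
    (hp : Nat.card (M ⧸ p) = m * n) : Nat.card (M ⧸ p ⊔ nsmulRange R M m) = m := by
  have hcard :
      Nat.card (M ⧸ p ⊔ nsmulRange R M m) * Nat.card (M ⧸ p ⊔ nsmulRange R M n) = m * n := by
    rw [← card_quotient_inf_of_sup_eq_top (sup_eq_top_of_coprime h le_sup_right le_sup_right),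
      sup_nsmulRange_inf_sup_nsmulRange h (nsmulRange_le_of_card_quotient hp), hp]
  have := Nat.finite_of_card_ne_zero (left_ne_zero_of_mul (hcard ▸ hmn))
  have := Nat.finite_of_card_ne_zero (right_ne_zero_of_mul (hcard ▸ hmn))
  exact Nat.eq_of_mul_eq_mul_of_coprime hcard (coprime_card_quotient h le_sup_right)
    (coprime_card_quotient h.symm le_sup_right)

variable (R M) in
noncomputable def cardQuotientEqMulEquivProd (hmn : m * n ≠ 0) (h : m.Coprime n) :
    {p : Submodule R M // Nat.card (M ⧸ p) = m * n} ≃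
      {p : Submodule R M // Nat.card (M ⧸ p) = m} ×
        {p : Submodule R M // Nat.card (M ⧸ p) = n} where
  toFun p :=
    (⟨p ⊔ nsmulRange R M m, card_quotient_sup_nsmulRange hmn h p.2⟩,
      ⟨p ⊔ nsmulRange R M n, card_quotient_sup_nsmulRange (mul_comm m n ▸ hmn) h.symm
        (p.2.trans (mul_comm m n))⟩)
  invFun pq := ⟨pq.1 ⊓ pq.2, by
    rw [card_quotient_inf_of_sup_eq_top (sup_eq_top_of_coprime h
      (nsmulRange_le_of_card_quotient pq.1.2) (nsmulRange_le_of_card_quotient pq.2.2)),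
      pq.1.2, pq.2.2]⟩
  left_inv p := Subtype.ext <|
    sup_nsmulRange_inf_sup_nsmulRange h (nsmulRange_le_of_card_quotient p.2)
  right_inv pq := Prod.ext
    (Subtype.ext <| inf_sup_nsmulRange h (nsmulRange_le_of_card_quotient pq.1.2)
      (nsmulRange_le_of_card_quotient pq.2.2))
    (Subtype.ext <| inf_comm pq.1.1 pq.2.1 ▸ inf_sup_nsmulRange h.symm
      (nsmulRange_le_of_card_quotient pq.2.2) (nsmulRange_le_of_card_quotient pq.1.2))

theorem card_subtype_card_quotient_mul (hmn : m * n ≠ 0) (h : m.Coprime n) :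
    Nat.card {p : Submodule R M // Nat.card (M ⧸ p) = m * n} =
      Nat.card {p : Submodule R M // Nat.card (M ⧸ p) = m} *
        Nat.card {p : Submodule R M // Nat.card (M ⧸ p) = n} := by
  rw [← Nat.card_prod]
  exact Nat.card_congr (cardQuotientEqMulEquivProd R M hmn h)

end Submodule

theorem stmt13_general (Λ : Type*) [Ring Λ]
    (m n : ℕ) (hm : 0 < m) (hn : 0 < n) (h : Nat.gcd m n = 1) :
    leftIdealCount Λ (m * n) = leftIdealCount Λ m * leftIdealCount Λ n :=
  Submodule.card_subtype_card_quotient_mul (Nat.mul_ne_zero hm.ne' hn.ne') h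

/-- Let `Λ` be a ring whose additive group is a free
`ℤ`-module of finite rank.  Then `N ↦ a_N(Λ)` is multiplicative on coprime
arguments: for positive coprime `m`, `n` one has `a_{mn}(Λ) = a_m(Λ)·a_n(Λ)`. -/
theorem stmt13 (Λ : Type*) [Ring Λ] [Module.Free ℤ Λ] [Module.Finite ℤ Λ]
    (m n : ℕ) (hm : 0 < m) (hn : 0 < n) (h : Nat.gcd m n = 1) :
    leftIdealCount Λ (m * n) = leftIdealCount Λ m * leftIdealCount Λ n :=
  stmt13_general Λ m n hm hn h
end

section
/- Let Λ be a ring whose underlying additive group is a free ℤ-module of finite rank, let p be a prime, and let ℤ_p denote the ring of p-adic integers. Then for every natural number k, the number of left ideals of Λ of index p^k equals the number of left ideals of the ℤ_p-algebra ℤ_p ⊗_ℤ Λ of index p^k. -/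
/-!
A left ideal of index `N` contains `N`, hence the left ideal `N A`; so along a surjection
`A → B` whose kernel lies in `N A`, taking preimages matches the left ideals of index `N` of `B`
with those of `A`. With `N = p ^ k`, both `Λ ≅ ℤ ⊗ Λ` and `ℤ_[p] ⊗ Λ` surject onto
`ZMod (p ^ k) ⊗ Λ` in this way: by right exactness of `- ⊗ Λ`, the kernels are generated by the
kernels `(p ^ k)` of `ℤ → ZMod (p ^ k)` and of `ℤ_[p] → ZMod (p ^ k)`.
-/

open scoped TensorProduct

section

variable {A B : Type*} [Ring A] [Ring B]

theorem Ideal.natCast_mem_of_card_quotient_eq {I : Ideal A} {N : ℕ}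
    (h : Nat.card (A ⧸ I) = N) : (N : A) ∈ I := by
  rw [← Submodule.Quotient.mk_eq_zero, ← nsmul_one, Submodule.Quotient.mk_smul, ← h,
    card_nsmul_eq_zero']

theorem Ideal.card_quotient_comap_of_surjective (f : A →+* B) (hf : Function.Surjective f)
    (J : Ideal B) : Nat.card (A ⧸ J.comap f) = Nat.card (B ⧸ J) :=
  J.toAddSubgroup.index_comap_of_surjective (f := f.toAddMonoidHom) hf

theorem leftIdealCount_eq_of_surjective (f : A →+* B) (hf : Function.Surjective f) {N : ℕ}
    (hker : RingHom.ker f ≤ Ideal.span {(N : A)}) :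
    leftIdealCount A N = leftIdealCount B N := by
  have hcontains (I : Ideal A) (hI : Nat.card (A ⧸ I) = N) : RingHom.ker f ≤ I :=
    hker.trans ((Ideal.span_singleton_le_iff_mem I).mpr (Ideal.natCast_mem_of_card_quotient_eq hI))
  refine Nat.card_congr ((((Ideal.relIsoOfSurjective f hf).toEquiv.subtypeEquiv fun J => ?_).trans
    (Equiv.subtypeSubtypeEquivSubtype (hcontains _))).symm)
  rw [← Ideal.card_quotient_comap_of_surjective f hf J]
  rfl

theorem leftIdealCount_congr (e : A ≃+* B) (N : ℕ) : leftIdealCount A N = leftIdealCount B N :=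
  leftIdealCount_eq_of_surjective e.toRingHom e.surjective (by simp)

end

theorem leftIdealCount_tensor_eq_of_ker_le {R A B : Type*} [CommRing R] [Ring A] [Ring B]
    [Algebra R A] [Algebra R B] (C : Type*) [Ring C] [Algebra R C] (f : A →ₐ[R] B)
    (hf : Function.Surjective f) {N : ℕ} (hker : RingHom.ker f ≤ Ideal.span {(N : A)}) :
    leftIdealCount (A ⊗[R] C) N = leftIdealCount (B ⊗[R] C) N := by
  refine leftIdealCount_eq_of_surjective
    (Algebra.TensorProduct.map f (AlgHom.id R C) : A ⊗[R] C →+* B ⊗[R] C)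
    (Algebra.TensorProduct.map_surjective f (AlgHom.id R C) hf Function.surjective_id) ?_
  rw [← AlgHom.ker_coe, Algebra.TensorProduct.rTensor_ker f hf]
  calc (RingHom.ker f).map Algebra.TensorProduct.includeLeft
      ≤ (Ideal.span {(N : A)}).map Algebra.TensorProduct.includeLeft := Ideal.map_mono hker
    _ = Ideal.span {(N : A ⊗[R] C)} := by rw [Ideal.map_span, Set.image_singleton, map_natCast]

theorem stmt14_general (Λ : Type*) [Ring Λ]
    (p : ℕ) [Fact p.Prime] (k : ℕ) :
    leftIdealCount Λ (p ^ k) = leftIdealCount (ℤ_[p] ⊗[ℤ] Λ) (p ^ k) := by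
  have hℤ : leftIdealCount (ℤ ⊗[ℤ] Λ) (p ^ k) = leftIdealCount (ZMod (p ^ k) ⊗[ℤ] Λ) (p ^ k) :=
    leftIdealCount_tensor_eq_of_ker_le Λ (Int.castRingHom _).toIntAlgHom
      (ZMod.ringHom_surjective _) (by exact_mod_cast (ZMod.ker_intCastRingHom (p ^ k)).le)
  have hℤ_p : leftIdealCount (ℤ_[p] ⊗[ℤ] Λ) (p ^ k) =
      leftIdealCount (ZMod (p ^ k) ⊗[ℤ] Λ) (p ^ k) :=
    leftIdealCount_tensor_eq_of_ker_le Λ (PadicInt.toZModPow k).toIntAlgHom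
      (ZMod.ringHom_surjective _) (by push_cast; exact (PadicInt.ker_toZModPow k).le)
  rw [← leftIdealCount_congr (Algebra.TensorProduct.lid ℤ Λ).toRingEquiv, hℤ, hℤ_p]

/-- Let `Λ` be a ring whose additive group is a free
`ℤ`-module of finite rank, `p` a prime, and `ℤ_[p]` the `p`-adic integers.
Then for every `k : ℕ`, the number of left ideals of `Λ` of index `p^k`
equals the number of left ideals of `ℤ_[p] ⊗[ℤ] Λ` of index `p^k`. -/
theorem stmt14 (Λ : Type*) [Ring Λ] [Module.Free ℤ Λ] [Module.Finite ℤ Λ]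
    (p : ℕ) [Fact p.Prime] (k : ℕ) :
    leftIdealCount Λ (p ^ k) = leftIdealCount (ℤ_[p] ⊗[ℤ] Λ) (p ^ k) :=
  stmt14_general Λ p k
end
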